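/- arXiv:2112.12622 — 3 statements merged into one kernel-verified Lean document; each statement's English description precedes it below -/
import Mathlib

section
/- If Ω is purely imaginary, then for every z ∈ ℝ^g and every δ'' ∈ (½ℤ)^g, the value θ[0;δ''](z|Ω) is strictly positive. -/
/-- The Riemann theta function with characteristic `(a, b)`, associated to the
period matrix `Ω`:
`θ[a;b](z|Ω) = Σ_{n ∈ ℤ^g} exp(iπ((n+a)·Ω(n+a) + 2(n+a)·(z+b)))`. -/
noncomputable def thetaChar {g : ℕ} (Ω : Matrix (Fin g) (Fin g) ℂ)
    (a b : Fin g → ℂ) (z : Fin g → ℂ) : ℂ :=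
  ∑' n : Fin g → ℤ,
    Complex.exp (Real.pi * Complex.I *
      ((∑ i, ((n i : ℂ) + a i) * (∑ j, Ω i j * ((n j : ℂ) + a j))) +
        2 * ∑ i, ((n i : ℂ) + a i) * (z i + b i)))

/-!
Write `Ω = i A` with `A` real positive definite, so that for real `z` and `δ''` the series is
`θ(Q, φ) = ∑ₙ exp(-π Q(n) + 2πi φ(n))` for the positive definite quadratic form `Q(v) = vᵀ A v`
and a real linear form `φ`. Completing the square in the first coordinate,
`Q(x, v) = a (x + ℓ v)² + Q'(v)` with `a > 0`, a linear form `ℓ` and the Schur complement `Q'`,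
again positive definite. Poisson summation in `x` then gives
`θ(Q, φ) = a^{-1/2} ∑ₘ exp(-π (m - t)² / a) θ(Q', φ(0, ·) + (m - t) ℓ)` with `t = φ(e₀)`,
a convergent sum of positive multiples of theta values in one dimension less; induction on the
dimension, starting from `θ = 1` in dimension zero, shows `θ(Q, φ) > 0`.
-/

open Real Complex
open scoped ComplexOrder

theorem summable_exp_neg_mul_add_sq {a : ℝ} (ha : 0 < a) (s : ℝ) :
    Summable fun n : ℤ => rexp (-π * a * (n + s) ^ 2) :=
  (HurwitzKernelBounds.summable_f_int 0 s ha).congr fun n => by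
    simp [HurwitzKernelBounds.f_int, mul_right_comm]

theorem tsum_cexp_neg_mul_add_sq {a : ℝ} (ha : 0 < a) (s t : ℝ) :
    ∑' x : ℤ, cexp (-π * a * (x + s) ^ 2 + 2 * π * I * t * x) =
      (√a)⁻¹ * ∑' m : ℤ, rexp (-π * (m - t) ^ 2 / a) * cexp (2 * π * I * s * (m - t)) := by
  have ha' : (a : ℂ) ≠ 0 := ofReal_ne_zero.mpr ha.ne'
  have hsqrt : (a : ℂ) ^ (1 / 2 : ℂ) = (√a : ℝ) := by
    rw [Real.sqrt_eq_rpow, ofReal_cpow ha.le]; norm_num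
  have hpoisson := Complex.tsum_exp_neg_quadratic (a := a) (by simpa using ha) (-a * s + I * t)
  rw [hsqrt] at hpoisson
  calc ∑' x : ℤ, cexp (-π * a * (x + s) ^ 2 + 2 * π * I * t * x)
      = cexp (-π * a * s ^ 2) *
          ∑' x : ℤ, cexp (-π * a * x ^ 2 + 2 * π * (-a * s + I * t) * x) := by
        rw [← tsum_mul_left]
        refine tsum_congr fun x => ?_
        rw [← Complex.exp_add]; ring_nf
    _ = _ := by
        rw [hpoisson, ← mul_assoc, mul_comm (cexp _), mul_assoc, ← tsum_mul_left, one_div,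
          ofReal_inv]
        congr 1
        refine tsum_congr fun m => ?_
        push_cast
        rw [← Complex.exp_add, ← Complex.exp_add]
        congr 1
        rw [show (m : ℂ) + I * (-a * s + I * t) = m - t - I * a * s by
          linear_combination (t : ℂ) * I_sq]
        linear_combination (-π * a * s ^ 2 : ℂ) * I_sq +
          (-π * I ^ 2 * a * s ^ 2 + 2 * π * I * s * (m - t) : ℂ) * mul_inv_cancel₀ ha'

theorem exists_tsum_exp_neg_mul_add_sq_le {a : ℝ} (ha : 0 < a) :
    ∃ C, ∀ s : ℝ, ∑' x : ℤ, rexp (-π * a * (x + s) ^ 2) ≤ C := by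
  have hsum : Summable fun m : ℤ => rexp (-π * m ^ 2 / a) :=
    (summable_exp_neg_mul_add_sq (inv_pos.mpr ha) 0).congr fun m => by ring_nf
  refine ⟨(√a)⁻¹ * ∑' m : ℤ, rexp (-π * m ^ 2 / a), fun s => ?_⟩
  have hpoisson := tsum_cexp_neg_mul_add_sq ha s 0
  simp only [ofReal_zero, mul_zero, zero_mul, add_zero, sub_zero] at hpoisson
  have hnorm (m : ℤ) :
      ‖(rexp (-π * m ^ 2 / a) : ℂ) * cexp (2 * π * I * s * m)‖ = rexp (-π * m ^ 2 / a) := by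
    rw [norm_mul, norm_real, norm_of_nonneg (exp_pos _).le, norm_exp]
    simp
  calc ∑' x : ℤ, rexp (-π * a * (x + s) ^ 2)
      = ‖((∑' x : ℤ, rexp (-π * a * (x + s) ^ 2) : ℝ) : ℂ)‖ := by
        rw [norm_real, norm_of_nonneg (tsum_nonneg fun x => (exp_pos _).le)]
    _ = ‖(((√a)⁻¹ : ℝ) : ℂ) *
          ∑' m : ℤ, (rexp (-π * m ^ 2 / a) : ℂ) * cexp (2 * π * I * s * m)‖ := by
        rw [← hpoisson, ofReal_tsum]
        push_cast
        rfl
    _ ≤ (√a)⁻¹ * ∑' m : ℤ, rexp (-π * m ^ 2 / a) := by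
        rw [norm_mul, norm_real, norm_of_nonneg (by positivity)]
        gcongr
        refine (norm_tsum_le_tsum_norm ?_).trans_eq (tsum_congr hnorm)
        exact hsum.congr fun m => (hnorm m).symm

theorem summable_fin_cons_iff {E M : Type*} [AddCommMonoid E] [TopologicalSpace E]
    {g : ℕ} {f : (Fin (g + 1) → M) → E} :
    Summable (fun p : (Fin g → M) × M => f (Fin.cons p.2 p.1)) ↔ Summable f :=
  ((Equiv.prodComm (Fin g → M) M).trans (Fin.consEquiv fun _ => M)).summable_iff

theorem Summable.tsum_eq_tsum_tsum_fin_cons {E M : Type*} [NormedAddCommGroup E]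
    [CompleteSpace E] {g : ℕ} {f : (Fin (g + 1) → M) → E} (hf : Summable f) :
    ∑' n, f n = ∑' v : Fin g → M, ∑' x : M, f (Fin.cons x v) := by
  let e := (Equiv.prodComm (Fin g → M) M).trans (Fin.consEquiv fun _ => M)
  rw [← e.tsum_eq]
  exact (e.summable_iff.mpr hf).tsum_prod

noncomputable section

namespace QuadraticMap

variable {g : ℕ}

def consZero : (Fin g → ℝ) →ₗ[ℝ] Fin (g + 1) → ℝ :=
  (Fin.consLinearEquiv ℝ fun _ => ℝ).toLinearMap ∘ₗ LinearMap.inr ℝ ℝ (Fin g → ℝ)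

@[simp]
theorem consZero_apply (v : Fin g → ℝ) : consZero v = Fin.cons 0 v := rfl

theorem cons_eq_smul_single_add_consZero (x : ℝ) (v : Fin g → ℝ) :
    (Fin.cons x v : Fin (g + 1) → ℝ) = x • Pi.single 0 1 + consZero v := by
  ext i
  cases i using Fin.cases <;> simp

def thetaTerm (Q : QuadraticForm ℝ (Fin g → ℝ)) (φ : Module.Dual ℝ (Fin g → ℝ))
    (n : Fin g → ℤ) : ℂ :=
  cexp (-π * Q (Int.cast ∘ n) + 2 * π * I * φ (Int.cast ∘ n))

def thetaSeries (Q : QuadraticForm ℝ (Fin g → ℝ)) (φ : Module.Dual ℝ (Fin g → ℝ)) : ℂ :=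
  ∑' n, thetaTerm Q φ n

theorem norm_thetaTerm (Q : QuadraticForm ℝ (Fin g → ℝ)) (φ : Module.Dual ℝ (Fin g → ℝ))
    (n : Fin g → ℤ) : ‖thetaTerm Q φ n‖ = rexp (-π * Q (Int.cast ∘ n)) := by
  rw [thetaTerm, norm_exp]
  simp

theorem thetaTerm_add (Q : QuadraticForm ℝ (Fin g → ℝ)) (φ ψ : Module.Dual ℝ (Fin g → ℝ))
    (n : Fin g → ℤ) :
    thetaTerm Q (φ + ψ) n = thetaTerm Q φ n * cexp (2 * π * I * ψ (Int.cast ∘ n)) := by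
  simp only [thetaTerm, LinearMap.add_apply, ← Complex.exp_add]
  push_cast
  ring_nf

section Cons

variable (Q : QuadraticForm ℝ (Fin (g + 1) → ℝ))

def firstCoordShift : Module.Dual ℝ (Fin g → ℝ) :=
  (2 * Q (Pi.single 0 1))⁻¹ • (Q.polarBilin (Pi.single 0 1)).comp consZero

/-- The restriction of `Q` to `{(-ℓ v, v)}` with `ℓ = firstCoordShift Q`: the form of the Schur
complement of the `(0, 0)` entry of the Gram matrix of `Q`. -/
def schurComplement : QuadraticForm ℝ (Fin g → ℝ) :=
  Q.comp (consZero - (firstCoordShift Q).smulRight (Pi.single 0 1))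

theorem apply_cons (hQ : Q (Pi.single 0 1) ≠ 0) (x : ℝ) (v : Fin g → ℝ) :
    Q (Fin.cons x v) =
      Q (Pi.single 0 1) * (x + firstCoordShift Q v) ^ 2 + schurComplement Q v := by
  have hpolar : polar Q (Pi.single 0 1) (consZero v) =
      2 * Q (Pi.single 0 1) * firstCoordShift Q v := by
    simp only [firstCoordShift, LinearMap.smul_apply, LinearMap.comp_apply,
      polarBilin_apply_apply, smul_eq_mul]
    field_simp
  rw [schurComplement, comp_apply, LinearMap.sub_apply, LinearMap.smulRight_apply,
    cons_eq_smul_single_add_consZero, sub_eq_add_neg, ← neg_smul, QuadraticMap.map_add Q,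
    QuadraticMap.map_add Q, Q.map_smul, Q.map_smul, polar_smul_left, polar_smul_right,
    polar_comm _ (consZero v), hpolar]
  simp only [smul_eq_mul]
  ring

theorem apply_intCast_cons (hQ : Q (Pi.single 0 1) ≠ 0) (x : ℤ) (v : Fin g → ℤ) :
    Q (Int.cast ∘ Fin.cons x v) =
      Q (Pi.single 0 1) * (x + firstCoordShift Q (Int.cast ∘ v)) ^ 2 +
        schurComplement Q (Int.cast ∘ v) := by
  rw [Fin.comp_cons, apply_cons Q hQ]

theorem thetaTerm_cons (hQ : Q (Pi.single 0 1) ≠ 0) (φ : Module.Dual ℝ (Fin (g + 1) → ℝ))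
    (x : ℤ) (v : Fin g → ℤ) :
    thetaTerm Q φ (Fin.cons x v) =
      cexp (-π * Q (Pi.single 0 1) * (x + firstCoordShift Q (Int.cast ∘ v)) ^ 2 +
          2 * π * I * φ (Pi.single 0 1) * x) *
        thetaTerm (schurComplement Q) (φ ∘ₗ consZero) v := by
  have hφ : φ (Int.cast ∘ Fin.cons x v) =
      x * φ (Pi.single 0 1) + φ (consZero (Int.cast ∘ v)) := by
    rw [Fin.comp_cons, cons_eq_smul_single_add_consZero, map_add, map_smul, smul_eq_mul]
  rw [thetaTerm, thetaTerm, apply_intCast_cons Q hQ, hφ, ← Complex.exp_add,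
    LinearMap.comp_apply]
  push_cast
  ring_nf

theorem tsum_thetaTerm_cons (hQ : 0 < Q (Pi.single 0 1))
    (φ : Module.Dual ℝ (Fin (g + 1) → ℝ)) (v : Fin g → ℤ) :
    ∑' x : ℤ, thetaTerm Q φ (Fin.cons x v) =
      (√(Q (Pi.single 0 1)))⁻¹ * ∑' m : ℤ,
        rexp (-π * (m - φ (Pi.single 0 1)) ^ 2 / Q (Pi.single 0 1)) *
          thetaTerm (schurComplement Q)
            (φ ∘ₗ consZero + ((m : ℝ) - φ (Pi.single 0 1)) • firstCoordShift Q) v := by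
  simp_rw [thetaTerm_cons Q hQ.ne', tsum_mul_right, tsum_cexp_neg_mul_add_sq hQ, thetaTerm_add,
    mul_assoc, ← tsum_mul_right]
  congr 2 with m
  simp only [LinearMap.smul_apply, smul_eq_mul]
  push_cast
  ring_nf

end Cons

theorem posDef_schurComplement {Q : QuadraticForm ℝ (Fin (g + 1) → ℝ)} (hQ : Q.PosDef) :
    (schurComplement Q).PosDef := by
  intro v hv
  refine hQ _ fun h => hv ?_
  ext i
  simpa [Pi.single_apply] using congrFun h i.succ

theorem PosDef.summable_exp_neg_pi_mul {Q : QuadraticForm ℝ (Fin g → ℝ)} (hQ : Q.PosDef) :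
    Summable fun n : Fin g → ℤ => rexp (-π * Q (Int.cast ∘ n)) := by
  induction g with
  | zero => exact Summable.of_finite
  | succ g ih =>
    have ha : 0 < Q (Pi.single 0 1) := hQ _ (by simp)
    obtain ⟨C, hC⟩ := exists_tsum_exp_neg_mul_add_sq_le ha
    rw [← summable_fin_cons_iff]
    simp_rw [apply_intCast_cons Q ha.ne', mul_add, Real.exp_add, ← mul_assoc]
    refine (summable_prod_of_nonneg fun _ => by positivity).2 ⟨fun v => ?_, ?_⟩
    · dsimp only
      exact (summable_exp_neg_mul_add_sq ha _).mul_right _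
    refine ((ih (posDef_schurComplement hQ)).mul_left C).of_nonneg_of_le
      (fun v => tsum_nonneg fun x => by positivity) fun v => ?_
    dsimp only
    rw [tsum_mul_right]
    exact mul_le_mul_of_nonneg_right (hC _) (exp_pos _).le

theorem PosDef.hasSum_thetaSeries_schurComplement {Q : QuadraticForm ℝ (Fin (g + 1) → ℝ)}
    (hQ : Q.PosDef) (φ : Module.Dual ℝ (Fin (g + 1) → ℝ)) :
    HasSum (fun m : ℤ =>
        ((√(Q (Pi.single 0 1)))⁻¹ *
            rexp (-π * (m - φ (Pi.single 0 1)) ^ 2 / Q (Pi.single 0 1)) : ℝ) *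
          thetaSeries (schurComplement Q)
            (φ ∘ₗ consZero + ((m : ℝ) - φ (Pi.single 0 1)) • firstCoordShift Q))
      (thetaSeries Q φ) := by
  have ha : 0 < Q (Pi.single 0 1) := hQ _ (by simp)
  set t := φ (Pi.single 0 1)
  set ψ : ℤ → Module.Dual ℝ (Fin g → ℝ) :=
    fun m => φ ∘ₗ consZero + ((m : ℝ) - t) • firstCoordShift Q
  set E : ℤ → ℝ := fun m => rexp (-π * (m - t) ^ 2 / Q (Pi.single 0 1))
  have hE : Summable E := (summable_exp_neg_mul_add_sq (inv_pos.2 ha) (-t)).congr fun m => by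
    simp only [E]; ring_nf
  have hsum : Summable (Function.uncurry fun m v =>
      (E m : ℂ) * thetaTerm (schurComplement Q) (ψ m) v) := by
    refine Summable.of_norm ((hE.mul_of_nonneg
      (summable_exp_neg_pi_mul (posDef_schurComplement hQ)) (fun _ => (exp_pos _).le)
      fun _ => (exp_pos _).le).congr fun ⟨m, v⟩ => ?_)
    rw [Function.uncurry_apply_pair, norm_mul, norm_real, norm_thetaTerm,
      Real.norm_of_nonneg (exp_pos _).le]
  have hθ : thetaSeries Q φ =
      (√(Q (Pi.single 0 1)))⁻¹ * ∑' m, E m * thetaSeries (schurComplement Q) (ψ m) := by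
    rw [thetaSeries, Summable.tsum_eq_tsum_tsum_fin_cons, tsum_congr (tsum_thetaTerm_cons Q ha φ),
      tsum_mul_left, hsum.tsum_comm]
    · simp only [thetaSeries, tsum_mul_left]
    · exact .of_norm (hQ.summable_exp_neg_pi_mul.congr fun n => (norm_thetaTerm Q φ n).symm)
  have hsum' : Summable fun m => (E m : ℂ) * thetaSeries (schurComplement Q) (ψ m) :=
    hsum.prod.congr fun m => by rw [thetaSeries, ← tsum_mul_left]; rfl
  rw [hθ, ← tsum_mul_left]
  simp only [ofReal_mul, ofReal_inv, mul_assoc]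
  exact (hsum'.mul_left _).hasSum

theorem PosDef.thetaSeries_pos {Q : QuadraticForm ℝ (Fin g → ℝ)} (hQ : Q.PosDef)
    (φ : Module.Dual ℝ (Fin g → ℝ)) : 0 < thetaSeries Q φ := by
  induction g with
  | zero =>
    have hQ0 (v : Fin 0 → ℝ) : Q v = 0 := by rw [Subsingleton.elim v 0, map_zero]
    have hφ0 (v : Fin 0 → ℝ) : φ v = 0 := by rw [Subsingleton.elim v 0, map_zero]
    simp [thetaSeries, thetaTerm, hQ0, hφ0]
  | succ g ih =>
    have ha : 0 < Q (Pi.single 0 1) := hQ _ (by simp)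
    have hθ := hQ.hasSum_thetaSeries_schurComplement φ
    rw [← hθ.tsum_eq]
    refine hθ.summable.tsum_pos (fun m => le_of_lt ?_) 0 ?_ <;>
      exact mul_pos (zero_lt_real.2 (by positivity)) (ih (posDef_schurComplement hQ) _)

end QuadraticMap

end

theorem thetaChar_eq_thetaSeries {g : ℕ} {A : Matrix (Fin g) (Fin g) ℝ}
    {Ω : Matrix (Fin g) (Fin g) ℂ} (hΩ : ∀ i j, Ω i j = A i j * I) (b z : Fin g → ℝ) :
    thetaChar Ω 0 (fun i => (b i : ℂ)) (fun i => (z i : ℂ)) =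
      QuadraticMap.thetaSeries A.toQuadraticForm' (dotProductEquiv ℝ (Fin g) (z + b)) := by
  refine tsum_congr fun n => congrArg cexp ?_
  simp only [Matrix.toQuadraticForm', LinearMap.BilinMap.toQuadraticMap_apply,
    Matrix.toLinearMap₂'_apply', dotProductEquiv_apply_apply, dotProduct, Matrix.mulVec,
    Pi.add_apply, Function.comp_apply, Pi.zero_apply, add_zero, hΩ]
  push_cast
  simp only [Finset.mul_sum, ← Finset.sum_add_distrib]
  refine Finset.sum_congr rfl fun i _ => ?_
  rw [mul_add, Finset.mul_sum]
  congr 1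
  · refine Finset.sum_congr rfl fun j _ => ?_
    linear_combination (π * n i * A i j * n j : ℂ) * I_sq
  · ring

theorem stmt6_general {g : ℕ} (Ω : Matrix (Fin g) (Fin g) ℂ)
    (hpos : Matrix.PosDef (Matrix.of fun i j => (Ω i j).im))
    (him : ∀ i j, (Ω i j).re = 0)
    (δ'' : Fin g → ℂ) (hδ'' : ∀ i, ∃ k : ℤ, δ'' i = k / 2) :
    ∀ x : Fin g → ℝ, ∃ r : ℝ, 0 < r ∧
      thetaChar Ω 0 δ'' (fun i => (x i : ℂ)) = (r : ℂ) := by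
  intro x
  have hΩ (i j : Fin g) : Ω i j = (Matrix.of fun i j => (Ω i j).im) i j * I := by
    apply Complex.ext <;> simp [him]
  have hδ : δ'' = fun i => ((δ'' i).re : ℂ) := by
    funext i
    obtain ⟨k, hk⟩ := hδ'' i
    simp [hk]
  have hθ := QuadraticMap.PosDef.thetaSeries_pos hpos.toQuadraticForm'
    (dotProductEquiv ℝ (Fin g) (x + fun i => (δ'' i).re))
  rw [← thetaChar_eq_thetaSeries hΩ, ← hδ] at hθ
  exact ⟨_, (pos_iff.1 hθ).1, eq_re_of_ofReal_le (r := 0) (by simpa using hθ.le)⟩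

/-- if `Ω` is purely imaginary (with `Im Ω` positive definite), then for
every `z ∈ ℝ^g` and every `δ'' ∈ (½ℤ)^g`, the value `θ[0;δ''](z|Ω)` is a strictly
positive real number. -/
theorem stmt6 {g : ℕ} (hg : 1 ≤ g) (Ω : Matrix (Fin g) (Fin g) ℂ)
    (hsym : Ω.IsSymm)
    (hpos : Matrix.PosDef (Matrix.of fun i j => (Ω i j).im))
    (him : ∀ i j, (Ω i j).re = 0)
    (δ'' : Fin g → ℂ) (hδ'' : ∀ i, ∃ k : ℤ, δ'' i = k / 2) :
    ∀ x : Fin g → ℝ, ∃ r : ℝ, 0 < r ∧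
      thetaChar Ω 0 δ'' (fun i => (x i : ℂ)) = (r : ℂ) :=
  stmt6_general Ω hpos him δ'' hδ''
end

section
/- Fay's identity in Fock's symmetric form: defining F_t(a,b) := θ(a+b−t)E(a,b), one has F_t(a,b)F_t(c,d) + F_t(a,d)F_t(b,c) + F_t(a,c)F_t(d,b) = 0 for all a,b,c,d and t. This follows formally from Mumford's form of Fay's trisecant identity θ(z+c−a)θ(z+d−b)E(c,b)E(a,d) + θ(z+c−b)θ(z+d−a)E(c,a)E(d,b) = θ(z+c+d−a−b)θ(z)E(c,d)E(a,b) by the substitution z = a+b−t, using the antisymmetry E(x,y) = −E(y,x). -/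
theorem stmt9_general {V : Type*} [AddCommGroup V] {X : Type*}
    (θ : V → ℂ) (E : X → X → ℂ) (ι : X → V)
    (hanti : ∀ x y, E x y = -E y x)
    (hFay : ∀ (z : V) (a b c d : X),
      θ (z + ι c - ι a) * θ (z + ι d - ι b) * E c b * E a d +
        θ (z + ι c - ι b) * θ (z + ι d - ι a) * E c a * E d b =
      θ (z + ι c + ι d - ι a - ι b) * θ z * E c d * E a b)
    (t : V) (a b c d : X) :
    (θ (ι a + ι b - t) * E a b) * (θ (ι c + ι d - t) * E c d) +
      (θ (ι a + ι d - t) * E a d) * (θ (ι b + ι c - t) * E b c) +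
      (θ (ι a + ι c - t) * E a c) * (θ (ι d + ι b - t) * E d b) = 0 := by
  have h := hFay (ι a + ι b - t) a b c d
  rw [hanti c b, hanti c a] at h
  abel_nf at h ⊢
  linear_combination -h

/-- Fay's identity in Fock's symmetric form. Abstract setting: `θ : V → ℂ`
on a complex vector space `V`, `E : X → X → ℂ` antisymmetric, `ι : X → V`, satisfying
Mumford's trisecant identity. Then with `F_t(a,b) := θ(a+b−t)E(a,b)` one has
`F_t(a,b)F_t(c,d) + F_t(a,d)F_t(b,c) + F_t(a,c)F_t(d,b) = 0`. -/
theorem stmt9 {V : Type*} [AddCommGroup V] [Module ℂ V] {X : Type*}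
    (θ : V → ℂ) (E : X → X → ℂ) (ι : X → V)
    (hanti : ∀ x y, E x y = -E y x)
    (hFay : ∀ (z : V) (a b c d : X),
      θ (z + ι c - ι a) * θ (z + ι d - ι b) * E c b * E a d +
        θ (z + ι c - ι b) * θ (z + ι d - ι a) * E c a * E d b =
      θ (z + ι c + ι d - ι a - ι b) * θ z * E c d * E a b)
    (t : V) (a b c d : X) :
    (θ (ι a + ι b - t) * E a b) * (θ (ι c + ι d - t) * E c d) +
      (θ (ι a + ι d - t) * E a d) * (θ (ι b + ι c - t) * E b c) +
      (θ (ι a + ι c - t) * E a c) * (θ (ι d + ι b - t) * E d b) = 0 :=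
  stmt9_general θ E ι hanti hFay t a b c d
end

section
/- Let α₁ < α'₁ < α'₂ < ⋯ < α'_m < α₁ + 1 be real numbers (lifts to ℝ of cyclically ordered points on a circle ℝ/ℤ), and for each j choose lifts with α_j < α'_j < α'_{j+1} < α_j + 1 (indices mod m, with α'_{m+1} := α'₁ + 1). Then: (a) ⌊α'_{j+1} − α_j⌋ + ⌊α'_j − α_j⌋ ≡ ⌊α'_{j+1} − α'_j⌋ (mod 2) for each j, where ⌊·⌋ denotes the integer floor; and (b) Σ_{j=1}^m ⌊α'_{j+1} − α'_j⌋ is odd. Consequently Σ_{j=1}^m ⌊α'_{j+1} − α_j⌋ + Σ_{j=1}^m ⌊α'_j − α_j⌋ is odd. -/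
/-!
All the floors are `0` or `-1`. Read the successor of `α'_j` through its lift in
`(α'_j, α_j + 1)`: then it lies strictly less than one turn above both `α_j` and `α'_j`, so both
floors vanish, except that at the last index the successor `α'₀` is that lift minus one full
turn, which lowers both floors to `-1`. As `⌊α'_j - α_j⌋ = 0` always, (a) holds index by index,
and the two sums in (b) and (c) both equal `-1`: exactly one index wraps around the circle.
-/

open Finset

section FloorRing

variable {R : Type*} [Ring R] [LinearOrder R] [IsOrderedRing R] [FloorRing R]

theorem floor_sub_eq_zero_of_le_of_lt_add_one {x y : R} (h₁ : x ≤ y) (h₂ : y < x + 1) :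
    ⌊y - x⌋ = 0 :=
  Int.floor_eq_zero_iff.2 ⟨sub_nonneg.2 h₁, sub_lt_iff_lt_add'.2 h₂⟩

theorem floor_sub_intCast_sub_eq_neg {x y : R} (k : ℤ) (h₁ : x ≤ y) (h₂ : y < x + 1) :
    ⌊y - k - x⌋ = -k := by
  rw [sub_right_comm, Int.floor_sub_intCast, floor_sub_eq_zero_of_le_of_lt_add_one h₁ h₂,
    zero_sub]

theorem floors_of_lt_of_lt_of_lt_add_one {x y z : R} (k : ℤ) (hxy : x < y) (hyz : y < z)
    (hzx : z < x + 1) :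
    ⌊z - k - x⌋ = -k ∧ ⌊y - x⌋ = 0 ∧ ⌊z - k - y⌋ = -k :=
  ⟨floor_sub_intCast_sub_eq_neg k (hxy.trans hyz).le hzx,
    floor_sub_eq_zero_of_le_of_lt_add_one hxy.le (hyz.trans hzx),
    floor_sub_intCast_sub_eq_neg k hyz.le (hzx.trans_le (by gcongr))⟩

end FloorRing

/-- The number of turns around the circle lost when the successor of index `j` in `0, …, m - 1`
is taken to be `α'₀` rather than its lift `α'₀ + 1`. -/
def wrapCount (m j : ℕ) : ℤ := if j + 1 < m then 0 else 1

theorem sum_range_wrapCount {m : ℕ} (hm : 0 < m) : ∑ j ∈ range m, wrapCount m j = 1 := by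
  obtain ⟨n, rfl⟩ := Nat.exists_eq_add_one_of_ne_zero hm.ne'
  have before_last : ∀ j ∈ range n, wrapCount (n + 1) j = 0 := fun j hj =>
    if_pos (by simpa using mem_range.1 hj)
  rw [sum_range_succ, sum_eq_zero before_last]
  simp [wrapCount]

theorem cyclicSucc_eq_liftedSucc_sub_wrapCount {R : Type*} [Ring R] (m j : ℕ) (α' : ℕ → R) :
    (if j + 1 < m then α' (j + 1) else α' 0) =
      (if j + 1 < m then α' (j + 1) else α' 0 + 1) - wrapCount m j := by
  unfold wrapCount
  split_ifs <;> simp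

/-- the combinatorial (parity-of-floors) core of the Kasteleyn condition.
The cyclically ordered angles on the circle `ℝ/ℤ` are given by lifts
`α'₀ < α'₁ < ⋯ < α'_{m−1} < α'₀ + 1` (indices `0,…,m−1`), and for each `j` the lifts
satisfy `α_j < α'_j < α'_{j+1} < α_j + 1` (indices mod `m`, the lift of the successor of
`α'_{m−1}` being `α'₀ + 1`). Writing `next j` for the successor of `α'_j` in the cyclic
order (`α'_{j+1}` for `j < m−1`, and `α'₀` for `j = m−1`), the claims are:
(a) `⌊next j − α_j⌋ + ⌊α'_j − α_j⌋ ≡ ⌊next j − α'_j⌋ (mod 2)` for each `j`;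
(b) `Σ_j ⌊next j − α'_j⌋` is odd; consequently
(c) `Σ_j ⌊next j − α_j⌋ + Σ_j ⌊α'_j − α_j⌋` is odd. -/
theorem stmt17 (m : ℕ) (hm : 0 < m) (α α' : ℕ → ℝ)
    (hord : ∀ j < m,
      α j < α' j ∧
      α' j < (if j + 1 < m then α' (j + 1) else α' 0 + 1) ∧
      (if j + 1 < m then α' (j + 1) else α' 0 + 1) < α j + 1) :
    (∀ j < m,
      (⌊(if j + 1 < m then α' (j + 1) else α' 0) - α j⌋ + ⌊α' j - α j⌋) % 2 =
        ⌊(if j + 1 < m then α' (j + 1) else α' 0) - α' j⌋ % 2) ∧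
    Odd (∑ j ∈ Finset.range m,
      ⌊(if j + 1 < m then α' (j + 1) else α' 0) - α' j⌋) ∧
    Odd ((∑ j ∈ Finset.range m,
        ⌊(if j + 1 < m then α' (j + 1) else α' 0) - α j⌋) +
      ∑ j ∈ Finset.range m, ⌊α' j - α j⌋) := by
  have floors : ∀ j < m,
      ⌊(if j + 1 < m then α' (j + 1) else α' 0) - α j⌋ = -wrapCount m j ∧
      ⌊α' j - α j⌋ = 0 ∧
      ⌊(if j + 1 < m then α' (j + 1) else α' 0) - α' j⌋ = -wrapCount m j := by
    intro j hj
    obtain ⟨h₁, h₂, h₃⟩ := hord j hj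
    rw [cyclicSucc_eq_liftedSucc_sub_wrapCount]
    exact floors_of_lt_of_lt_of_lt_add_one _ h₁ h₂ h₃
  have sum_floors : ∀ f : ℕ → ℤ, (∀ j < m, f j = -wrapCount m j) →
      ∑ j ∈ range m, f j = -1 := fun f hf => by
    rw [sum_congr rfl fun j hj => hf j (mem_range.1 hj), sum_neg_distrib, sum_range_wrapCount hm]
  refine ⟨fun j hj => ?_, ?_, ?_⟩
  · rw [(floors j hj).1, (floors j hj).2.1, (floors j hj).2.2, add_zero]
  · rw [sum_floors _ fun j hj => (floors j hj).2.2]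
    exact odd_neg_one
  · rw [sum_floors _ fun j hj => (floors j hj).1,
      sum_eq_zero fun j hj => (floors j (mem_range.1 hj)).2.1, add_zero]
    exact odd_neg_one
end
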